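/- For the bracket on ℝ² determined by {p,q} = q/(2π), and with x(p,q) = q^{2k} cos(2πp/q), y(p,q) = q^{2k+1} sin(2πp/q), z(p,q) = q², one has on q ≠ 0: {x,y} = -(2k+1) z^{2k} + x², {y,z} = 2zx, {z,x} = 2y. -/

import Mathlib

/-!
With `θ = 2πp/q`, a function `q^m φ(θ)` has `∂_p = 2π q^{m-1} φ'(θ)` and
`∂_q = q^{m-1} (m φ(θ) - θ φ'(θ))`, so the `θ φ'` terms cancel in the bracket:
`{q^m φ(θ), q^n ψ(θ)} = q^{m+n-1} (n φ' ψ - m φ ψ')`.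
Taking `φ, ψ ∈ {cos, sin, 1}` gives the three relations, the first after `sin² + cos² = 1`.
-/

open Real

/-- The Poisson bracket on `ℝ²` determined by `{p,q} = q/(2π)`. -/
noncomputable def pb2 (f g : ℝ × ℝ → ℝ) (v : ℝ × ℝ) : ℝ :=
  (v.2 / (2 * π)) *
    ((fderiv ℝ f v) (1, 0) * (fderiv ℝ g v) (0, 1) -
     (fderiv ℝ f v) (0, 1) * (fderiv ℝ g v) (1, 0))

open ContinuousLinearMap

noncomputable def angleCoord (v : ℝ × ℝ) : ℝ := 2 * π * v.1 / v.2

lemma pb2_eq_of_hasFDerivAt {f g : ℝ × ℝ → ℝ} {v : ℝ × ℝ} {a b c d : ℝ}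
    (hf : HasFDerivAt f (a • fst ℝ ℝ ℝ + b • snd ℝ ℝ ℝ) v)
    (hg : HasFDerivAt g (c • fst ℝ ℝ ℝ + d • snd ℝ ℝ ℝ) v) :
    pb2 f g v = v.2 / (2 * π) * (a * d - b * c) := by
  simp [pb2, hf.fderiv, hg.fderiv]

lemma hasFDerivAt_angleCoord {v : ℝ × ℝ} (hv : v.2 ≠ 0) :
    HasFDerivAt angleCoord
      ((2 * π / v.2) • fst ℝ ℝ ℝ + (-angleCoord v / v.2) • snd ℝ ℝ ℝ) v := by
  have h := (hasFDerivAt_fst.const_mul (2 * π)).mul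
    ((hasDerivAt_inv hv).comp_hasFDerivAt v (hasFDerivAt_snd (𝕜 := ℝ) (p := v)))
  refine (h.congr_fderiv ?_).congr_of_eventuallyEq (.of_forall fun w => ?_)
  · ext <;> simp [angleCoord] <;> field_simp
  · simp [angleCoord, div_eq_mul_inv]

lemma hasFDerivAt_snd_pow (m : ℕ) {v : ℝ × ℝ} (hv : v.2 ≠ 0) :
    HasFDerivAt (fun w : ℝ × ℝ => w.2 ^ m) ((m * v.2 ^ m / v.2) • snd ℝ ℝ ℝ) v := by
  refine ((hasDerivAt_pow m v.2).comp_hasFDerivAt v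
    (hasFDerivAt_snd (𝕜 := ℝ) (p := v))).congr_fderiv ?_
  rcases m with _ | m
  · simp
  · rw [pow_succ, Nat.add_sub_cancel]; field_simp

lemma hasFDerivAt_snd_pow_mul_comp_angleCoord {φ : ℝ → ℝ} {φ' : ℝ} (m : ℕ) {v : ℝ × ℝ}
    (hv : v.2 ≠ 0) (hφ : HasDerivAt φ φ' (angleCoord v)) :
    HasFDerivAt (fun w => w.2 ^ m * φ (angleCoord w))
      ((2 * π * v.2 ^ m * φ' / v.2) • fst ℝ ℝ ℝ +
        (v.2 ^ m * (m * φ (angleCoord v) - angleCoord v * φ') / v.2) • snd ℝ ℝ ℝ) v := by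
  refine ((hasFDerivAt_snd_pow m hv).mul
    (hφ.comp_hasFDerivAt v (hasFDerivAt_angleCoord hv))).congr_fderiv ?_
  ext <;> simp <;> ring

lemma pb2_snd_pow_mul_comp_angleCoord {f g : ℝ × ℝ → ℝ} {φ ψ : ℝ → ℝ} {φ' ψ' : ℝ}
    {m n : ℕ} {v : ℝ × ℝ} (hf : ∀ w, f w = w.2 ^ m * φ (angleCoord w))
    (hg : ∀ w, g w = w.2 ^ n * ψ (angleCoord w)) (hv : v.2 ≠ 0)
    (hφ : HasDerivAt φ φ' (angleCoord v)) (hψ : HasDerivAt ψ ψ' (angleCoord v)) :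
    pb2 f g v =
      v.2 ^ (m + n) * (n * φ' * ψ (angleCoord v) - m * φ (angleCoord v) * ψ') / v.2 := by
  obtain rfl : f = _ := funext hf
  obtain rfl : g = _ := funext hg
  rw [pb2_eq_of_hasFDerivAt (hasFDerivAt_snd_pow_mul_comp_angleCoord m hv hφ)
    (hasFDerivAt_snd_pow_mul_comp_angleCoord n hv hψ)]
  field_simp
  ring

theorem stmt17_general (k : ℕ)
    (x y z : ℝ × ℝ → ℝ)
    (hx : ∀ v : ℝ × ℝ, x v = v.2 ^ (2 * k) * Real.cos (2 * π * v.1 / v.2))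
    (hy : ∀ v : ℝ × ℝ, y v = v.2 ^ (2 * k + 1) * Real.sin (2 * π * v.1 / v.2))
    (hz : ∀ v : ℝ × ℝ, z v = v.2 ^ 2) :
    ∀ v : ℝ × ℝ, v.2 ≠ 0 →
      pb2 x y v = -(2 * (k : ℝ) + 1) * z v ^ (2 * k) + x v ^ 2 ∧
      pb2 y z v = 2 * z v * x v ∧
      pb2 z x v = 2 * y v := by
  have hz' (w : ℝ × ℝ) : z w = w.2 ^ 2 * (fun _ => (1 : ℝ)) (angleCoord w) := by simp [hz]
  intro v hv
  have hcos := hasDerivAt_cos (angleCoord v)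
  have hsin := hasDerivAt_sin (angleCoord v)
  have hone := hasDerivAt_const (angleCoord v) (1 : ℝ)
  rw [pb2_snd_pow_mul_comp_angleCoord hx hy hv hcos hsin,
    pb2_snd_pow_mul_comp_angleCoord hy hz' hv hsin hone,
    pb2_snd_pow_mul_comp_angleCoord hz' hx hv hone hcos, hx, hy, hz]
  unfold angleCoord
  refine ⟨?_, ?_, ?_⟩
  · field_simp
    push_cast
    linear_combination
      (-(2 * (k : ℝ) + 1) * v.2 ^ (4 * k + 1)) * sin_sq_add_cos_sq (2 * π * v.1 / v.2)
  · field_simp; ring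
  · field_simp; ring

/-- On `q ≠ 0`: `{x,y} = -(2k+1)z^{2k} + x²`, `{y,z} = 2zx`, `{z,x} = 2y` for
`x = q^{2k} cos(2πp/q)`, `y = q^{2k+1} sin(2πp/q)`, `z = q²`. -/
theorem stmt17 (k : ℕ) (hk : 2 ≤ k)
    (x y z : ℝ × ℝ → ℝ)
    (hx : ∀ v : ℝ × ℝ, x v = v.2 ^ (2 * k) * Real.cos (2 * π * v.1 / v.2))
    (hy : ∀ v : ℝ × ℝ, y v = v.2 ^ (2 * k + 1) * Real.sin (2 * π * v.1 / v.2))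
    (hz : ∀ v : ℝ × ℝ, z v = v.2 ^ 2) :
    ∀ v : ℝ × ℝ, v.2 ≠ 0 →
      pb2 x y v = -(2 * (k : ℝ) + 1) * z v ^ (2 * k) + x v ^ 2 ∧
      pb2 y z v = 2 * z v * x v ∧
      pb2 z x v = 2 * y v :=
  stmt17_general k x y z hx hy hz
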